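/- arXiv:2009.00509 — 3 statements merged into one kernel-verified Lean document; each statement's English description precedes it below -/
import Mathlib

section
/- Let ℓ₁, ℓ₂ : ℂ → ℝ be continuous, bounded functions with ℓᵢ(w) > 0 for all w, and fix z ∈ ℂ. For ε > 0 and i ∈ {1,2}, let χᵢ,ε : ℂ → ℝ be the indicator function of the set {u ∈ ℂ : ‖u‖ > ε·(ℓᵢ(z) + ℓᵢ(z + u))/2}. Then the limit as ε → 0⁺ of ∫_ℂ (χ₁,ε(u) − χ₂,ε(u)) · ‖u‖⁻² du (Lebesgue integral over ℂ ≅ ℝ²) exists and equals −2π · log(ℓ₁(z)/ℓ₂(z)). -/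
/-!
Fix δ > 0. For small ε, continuity of `ℓ` at `z` (near `u = 0`) and its upper bound (far from
`0`) squeeze the region `{u | ‖u‖ > ε (ℓ z + ℓ (z + u)) / 2}` between the exteriors of the discs
of radii `ε (ℓ z + δ)` and `ε (ℓ z - δ)`. In dimension `n`, the integral of `‖u‖⁻ⁿ` between the
spheres of radii `s` and `t` is `n |B₁| log (t / s)`, which does not see the common scale `ε`.
Hence for small ε the integral lies between `2π log ((ℓ₂ z - δ) / (ℓ₁ z + δ))` and
`2π log ((ℓ₂ z + δ) / (ℓ₁ z - δ))`, and δ → 0 gives the limit.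
-/

open MeasureTheory Real Filter Set Topology Module

section Radial

variable {E : Type*} [NormedAddCommGroup E] [NormedSpace ℝ E] [FiniteDimensional ℝ E]
  [Nontrivial E] [MeasurableSpace E] [BorelSpace E] (μ : Measure E) [μ.IsAddHaarMeasure]

lemma pow_pred_mul_indicator_Ioi_sub_indicator_Ioi {n : ℕ} (hn : 0 < n) {s t y : ℝ}
    (hs : 0 < s) (hst : s ≤ t) :
    y ^ (n - 1) * (((Ioi s).indicator (fun _ => (1 : ℝ)) y
      - (Ioi t).indicator (fun _ => (1 : ℝ)) y) * (y ^ n)⁻¹) = (Ioc s t).indicator (·⁻¹) y := by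
  have hdiff : (Ioi s).indicator (fun _ => (1 : ℝ)) y - (Ioi t).indicator (fun _ => (1 : ℝ)) y
      = (Ioc s t).indicator (fun _ => (1 : ℝ)) y := by
    rw [← Ioi_sdiff_Ioi, indicator_sdiff (Ioi_subset_Ioi hst)]
    rfl
  rw [hdiff]
  by_cases hy : y ∈ Ioc s t
  · have hy0 : y ≠ 0 := (hs.trans hy.1).ne'
    rw [indicator_of_mem hy, indicator_of_mem hy, ← pow_sub_one_mul hn.ne' y]
    field_simp
  · simp [indicator_of_notMem hy]

theorem integrable_and_integral_indicator_norm_gt_sub {s t : ℝ} (hs : 0 < s) (ht : 0 < t) :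
    Integrable (fun u : E => ({u | s < ‖u‖}.indicator (fun _ => (1 : ℝ)) u
      - {u | t < ‖u‖}.indicator (fun _ => (1 : ℝ)) u) * (‖u‖ ^ finrank ℝ E)⁻¹) μ ∧
    ∫ u, ({u | s < ‖u‖}.indicator (fun _ => (1 : ℝ)) u
      - {u | t < ‖u‖}.indicator (fun _ => (1 : ℝ)) u) * (‖u‖ ^ finrank ℝ E)⁻¹ ∂μ
      = finrank ℝ E * μ.real (Metric.ball 0 1) * log (t / s) := by
  wlog hst : s ≤ t generalizing s t
  · obtain ⟨hint, hval⟩ := this ht hs (le_of_not_ge hst)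
    have hswap : ∀ u : E, ({u | s < ‖u‖}.indicator (fun _ => (1 : ℝ)) u
        - {u | t < ‖u‖}.indicator (fun _ => (1 : ℝ)) u) * (‖u‖ ^ finrank ℝ E)⁻¹
        = -(({u | t < ‖u‖}.indicator (fun _ => (1 : ℝ)) u
        - {u | s < ‖u‖}.indicator (fun _ => (1 : ℝ)) u) * (‖u‖ ^ finrank ℝ E)⁻¹) :=
      fun u => by ring
    simp only [hswap, integral_neg, hval]
    exact ⟨hint.neg, by rw [← inv_div, log_inv, mul_neg, neg_neg]⟩
  set f : ℝ → ℝ := fun y => ((Ioi s).indicator (fun _ => (1 : ℝ)) y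
      - (Ioi t).indicator (fun _ => (1 : ℝ)) y) * (y ^ finrank ℝ E)⁻¹
  have hprofile : EqOn (fun y => y ^ (finrank ℝ E - 1) • f y) ((Ioc s t).indicator (·⁻¹))
      (Ioi 0) := fun y _ =>
    pow_pred_mul_indicator_Ioi_sub_indicator_Ioi finrank_pos hs hst
  have hinv : IntegrableOn (·⁻¹) (Ioc s t) :=
    (intervalIntegrable_iff_integrableOn_Ioc_of_le hst).1
      (intervalIntegral.intervalIntegrable_inv
        (fun y hy => (hs.trans_le (uIcc_of_le hst ▸ hy).1).ne') continuousOn_id)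
  refine ⟨(integrable_fun_norm_addHaar μ (f := f)).2 ?_, ?_⟩
  · rw [integrableOn_congr_fun hprofile measurableSet_Ioi]
    exact (integrable_indicator_iff measurableSet_Ioc).2 hinv |>.integrableOn
  · change ∫ u, f ‖u‖ ∂μ = _
    rw [integral_fun_norm_addHaar μ f, setIntegral_congr_fun measurableSet_Ioi hprofile,
      integral_indicator measurableSet_Ioc, Measure.restrict_restrict measurableSet_Ioc,
      inter_eq_self_of_subset_left (Ioc_subset_Ioi_self.trans (Ioi_subset_Ioi hs.le)),
      ← intervalIntegral.integral_of_le hst, integral_inv_of_pos hs ht, nsmul_eq_mul, smul_eq_mul,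
      mul_assoc]

theorem integral_indicator_sub_indicator_mem_Icc {n : ℕ} (hn : finrank ℝ E = n) {S T : Set E}
    (hS : MeasurableSet S) (hT : MeasurableSet T) {s₁ s₂ t₁ t₂ : ℝ} (hs₁ : 0 < s₁)
    (hs₂ : 0 < s₂) (ht₁ : 0 < t₁) (ht₂ : 0 < t₂)
    (hS₂ : {u | s₂ < ‖u‖} ⊆ S) (hS₁ : S ⊆ {u | s₁ < ‖u‖})
    (hT₂ : {u | t₂ < ‖u‖} ⊆ T) (hT₁ : T ⊆ {u | t₁ < ‖u‖}) :
    ∫ u, (S.indicator (fun _ => (1 : ℝ)) u - T.indicator (fun _ => (1 : ℝ)) u)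
      * (‖u‖ ^ n)⁻¹ ∂μ ∈
      Icc (n * μ.real (Metric.ball 0 1) * log (t₁ / s₂))
        (n * μ.real (Metric.ball 0 1) * log (t₂ / s₁)) := by
  subst hn
  have hone : ∀ _ : E, (0 : ℝ) ≤ 1 := fun _ => zero_le_one
  have hlower : ∀ u : E, ({u | s₂ < ‖u‖}.indicator (fun _ => (1 : ℝ)) u
      - {u | t₁ < ‖u‖}.indicator (fun _ => (1 : ℝ)) u) * (‖u‖ ^ finrank ℝ E)⁻¹
      ≤ (S.indicator (fun _ => (1 : ℝ)) u - T.indicator (fun _ => (1 : ℝ)) u)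
        * (‖u‖ ^ finrank ℝ E)⁻¹ := fun u =>
    mul_le_mul_of_nonneg_right (sub_le_sub (indicator_le_indicator_of_subset hS₂ hone u)
      (indicator_le_indicator_of_subset hT₁ hone u)) (by positivity)
  have hupper : ∀ u : E, (S.indicator (fun _ => (1 : ℝ)) u - T.indicator (fun _ => (1 : ℝ)) u)
        * (‖u‖ ^ finrank ℝ E)⁻¹
      ≤ ({u | s₁ < ‖u‖}.indicator (fun _ => (1 : ℝ)) u
      - {u | t₂ < ‖u‖}.indicator (fun _ => (1 : ℝ)) u) * (‖u‖ ^ finrank ℝ E)⁻¹ := fun u =>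
    mul_le_mul_of_nonneg_right (sub_le_sub (indicator_le_indicator_of_subset hS₁ hone u)
      (indicator_le_indicator_of_subset hT₂ hone u)) (by positivity)
  obtain ⟨hint_lo, hval_lo⟩ := integrable_and_integral_indicator_norm_gt_sub μ hs₂ ht₁
  obtain ⟨hint_hi, hval_hi⟩ := integrable_and_integral_indicator_norm_gt_sub μ hs₁ ht₂
  have hint : Integrable (fun u => (S.indicator (fun _ => (1 : ℝ)) u
      - T.indicator (fun _ => (1 : ℝ)) u) * (‖u‖ ^ finrank ℝ E)⁻¹) μ :=
    integrable_of_le_of_le (by fun_prop (disch := assumption)) (.of_forall hlower)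
      (.of_forall hupper) hint_lo hint_hi
  exact ⟨hval_lo ▸ integral_mono hint_lo hint hlower, hval_hi ▸ integral_mono hint hint_hi hupper⟩

end Radial

lemma tendsto_of_forall_eventually_mem_Icc {α ι β : Type*} [TopologicalSpace β] [LinearOrder β]
    [OrderTopology β] {l : Filter α} {l' : Filter ι} [l'.NeBot] {f : α → β} {lo hi : ι → β}
    {b : β} (hlo : Tendsto lo l' (𝓝 b)) (hhi : Tendsto hi l' (𝓝 b))
    (h : ∀ᶠ i in l', ∀ᶠ x in l, f x ∈ Icc (lo i) (hi i)) : Tendsto f l (𝓝 b) := by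
  refine tendsto_order.2 ⟨fun c hc => ?_, fun c hc => ?_⟩
  · obtain ⟨i, hci, hfi⟩ := ((hlo.eventually (lt_mem_nhds hc)).and h).exists
    exact hfi.mono fun x hx => hci.trans_le hx.1
  · obtain ⟨i, hci, hfi⟩ := ((hhi.eventually (gt_mem_nhds hc)).and h).exists
    exact hfi.mono fun x hx => hx.2.trans_lt hci

lemma eventually_norm_gt_subset_cutoff_subset {E : Type*} [SeminormedAddCommGroup E]
    {ℓ : E → ℝ} {z : E} (hc : ContinuousAt ℓ z) (hb : ∃ C, ∀ w, ℓ w ≤ C) {δ : ℝ} (hδ : 0 < δ) :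
    ∀ᶠ ε in 𝓝[>] 0, {u | ε * (ℓ z + δ) < ‖u‖} ⊆ {u | ‖u‖ > ε * (ℓ z + ℓ (z + u)) / 2} ∧
      {u | ‖u‖ > ε * (ℓ z + ℓ (z + u)) / 2} ⊆ {u | ε * (ℓ z - δ) < ‖u‖} := by
  obtain ⟨C, hC⟩ := hb
  obtain ⟨ρ, hρ, hnear⟩ := Metric.continuousAt_iff.1 hc δ hδ
  have hsmall : ∀ᶠ ε in 𝓝[>] (0 : ℝ), ε * C < ρ :=
    (((continuous_mul_const C).tendsto' 0 0 (zero_mul C)).mono_left nhdsWithin_le_nhds).eventually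
      (gt_mem_nhds hρ)
  filter_upwards [self_mem_nhdsWithin, hsmall] with ε (hε : 0 < ε) hεC
  have hℓ : ∀ u, ‖u‖ < ρ → |ℓ (z + u) - ℓ z| < δ := fun u hu => by
    simpa [Real.dist_eq] using hnear (by rwa [dist_self_add_left])
  constructor
  · intro u (hu : ε * (ℓ z + δ) < ‖u‖)
    show ε * (ℓ z + ℓ (z + u)) / 2 < ‖u‖
    rcases lt_or_ge ‖u‖ ρ with hρu | hρu
    · nlinarith [(abs_lt.1 (hℓ u hρu)).2]
    · nlinarith [hC z, hC (z + u)]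
  · intro u (hu : ε * (ℓ z + ℓ (z + u)) / 2 < ‖u‖)
    show ε * (ℓ z - δ) < ‖u‖
    rcases lt_or_ge ‖u‖ ρ with hρu | hρu
    · nlinarith [(abs_lt.1 (hℓ u hρu)).1]
    · nlinarith [hC z]

/-- The cutoff dependence of the regularized propagator: the difference of the
two regularized integrals of `‖u‖⁻²` converges, as `ε → 0⁺`, to
`-2π · log (ℓ₁ z / ℓ₂ z)`. -/
theorem cutoff_difference_limit (ℓ₁ ℓ₂ : ℂ → ℝ)
    (h₁c : Continuous ℓ₁) (h₂c : Continuous ℓ₂)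
    (h₁b : ∃ C, ∀ w, ℓ₁ w ≤ C) (h₂b : ∃ C, ∀ w, ℓ₂ w ≤ C)
    (h₁p : ∀ w, 0 < ℓ₁ w) (h₂p : ∀ w, 0 < ℓ₂ w) (z : ℂ) :
    Tendsto
      (fun ε : ℝ =>
        ∫ u : ℂ,
          ((Set.indicator {u : ℂ | ‖u‖ > ε * (ℓ₁ z + ℓ₁ (z + u)) / 2}
              (fun _ => (1 : ℝ)) u)
            - (Set.indicator {u : ℂ | ‖u‖ > ε * (ℓ₂ z + ℓ₂ (z + u)) / 2}
              (fun _ => (1 : ℝ)) u)) * (‖u‖ ^ 2)⁻¹ ∂volume)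
      (nhdsWithin 0 (Set.Ioi 0))
      (nhds (-(2 * π) * Real.log (ℓ₁ z / ℓ₂ z))) := by
  have ha := h₁p z
  have hb := h₂p z
  have hdisk : ((2 : ℕ) : ℝ) * volume.real (Metric.ball (0 : ℂ) 1) = 2 * π := by
    simp [measureReal_def, Complex.volume_ball]
  rw [neg_mul_comm, ← log_inv, inv_div]
  refine tendsto_of_forall_eventually_mem_Icc (l' := 𝓝[>] 0)
    (lo := fun δ => 2 * π * log ((ℓ₂ z - δ) / (ℓ₁ z + δ)))
    (hi := fun δ => 2 * π * log ((ℓ₂ z + δ) / (ℓ₁ z - δ))) ?_ ?_ ?_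
  · have : ContinuousAt (fun δ => 2 * π * log ((ℓ₂ z - δ) / (ℓ₁ z + δ))) 0 := by
      fun_prop (disch := simp [ha.ne', hb.ne'])
    simpa using this.tendsto.mono_left nhdsWithin_le_nhds
  · have : ContinuousAt (fun δ => 2 * π * log ((ℓ₂ z + δ) / (ℓ₁ z - δ))) 0 := by
      fun_prop (disch := simp [ha.ne', hb.ne'])
    simpa using this.tendsto.mono_left nhdsWithin_le_nhds
  filter_upwards [Ioo_mem_nhdsGT (lt_min ha hb)] with δ ⟨hδ, hδab⟩
  obtain ⟨hδa, hδb⟩ := lt_min_iff.1 hδab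
  filter_upwards [eventually_norm_gt_subset_cutoff_subset (h₁c.continuousAt (x := z)) h₁b hδ,
    eventually_norm_gt_subset_cutoff_subset (h₂c.continuousAt (x := z)) h₂b hδ, self_mem_nhdsWithin]
    with ε ⟨h₁l, h₁u⟩ ⟨h₂l, h₂u⟩ (hε : 0 < ε)
  have hbounds := integral_indicator_sub_indicator_mem_Icc volume Complex.finrank_real_complex
    (isOpen_lt (by fun_prop) continuous_norm).measurableSet
    (isOpen_lt (by fun_prop) continuous_norm).measurableSet
    (by positivity : 0 < ε * (ℓ₁ z - δ)) (by positivity) (by positivity) (by positivity)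
    h₁l h₁u h₂l h₂u
  rwa [hdisk, mul_div_mul_left _ _ hε.ne', mul_div_mul_left _ _ hε.ne'] at hbounds
end

section
/- Let ℓ₁, ℓ₂ : ℂ → ℝ be continuous, bounded functions with ℓᵢ(w) > 0 for all w, and let φ : ℂ × ℂ → ℂ be continuous with compact support. For ε > 0 and i ∈ {1,2}, let χᵢ,ε : ℂ × ℂ → ℝ be the indicator function of the set {(z,u) : ‖u‖ > ε·(ℓᵢ(z) + ℓᵢ(z + u))/2}. Then the limit as ε → 0⁺ of the double Lebesgue integral ∫_ℂ ∫_ℂ (χ₁,ε(z,u) − χ₂,ε(z,u)) · φ(z,u) · ‖u‖⁻² du dz exists and equals −2π · ∫_ℂ log(ℓ₁(z)/ℓ₂(z)) · φ(z,0) dz. -/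
/-!
Substituting `u = ε v` turns the regularized kernel `χ_ε(z, u) ‖u‖⁻²` into one whose cutoff
radii `(ℓ(z) + ℓ(z + ε v)) / 2` tend to `ℓ(z)`, because `‖u‖⁻² du` is scale invariant. The
difference of two cutoffs lives in a fixed annulus `c < ‖v‖ ≤ C`, where `‖v‖⁻²` is integrable, so
dominated convergence applies, first in `v` and then in `z`. In polar coordinates the limit
kernel integrates to `∫_{ℓ₁}^{ℓ₂} 2π dr / r = 2π log (ℓ₂ / ℓ₁)`.
-/

open MeasureTheory Real Filter Set Topology Metric Module

noncomputable def cutoffDiff (a b t : ℝ) : ℝ := (if a < t then 1 else 0) - (if b < t then 1 else 0)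

lemma cutoffDiff_of_le {a b : ℝ} (h : a ≤ b) (t : ℝ) :
    cutoffDiff a b t = (Ioc a b).indicator 1 t := by
  by_cases h₁ : a < t <;> by_cases h₂ : b < t <;> simp [cutoffDiff, indicator, h₁, h₂]
  linarith

lemma cutoffDiff_swap (a b t : ℝ) : cutoffDiff b a t = -cutoffDiff a b t := by
  simp only [cutoffDiff, neg_sub]

lemma abs_cutoffDiff_le {a b c C t : ℝ} (ha : a ∈ Icc c C) (hb : b ∈ Icc c C) :
    |cutoffDiff a b t| ≤ cutoffDiff c C t := by
  obtain ⟨_, _⟩ := ha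
  obtain ⟨_, _⟩ := hb
  unfold cutoffDiff
  split_ifs <;> norm_num <;> linarith

lemma cutoffDiff_mul_left {ε : ℝ} (hε : 0 < ε) (a b t : ℝ) :
    cutoffDiff (ε * a) (ε * b) (ε * t) = cutoffDiff a b t := by
  simp only [cutoffDiff, mul_lt_mul_iff_right₀ hε]

lemma Measurable.cutoffDiff {α : Type*} [MeasurableSpace α] {f g h : α → ℝ} (hf : Measurable f)
    (hg : Measurable g) (hh : Measurable h) :
    Measurable fun x => cutoffDiff (f x) (g x) (h x) :=
  (Measurable.ite (measurableSet_lt hf hh) measurable_const measurable_const).sub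
    (Measurable.ite (measurableSet_lt hg hh) measurable_const measurable_const)

lemma eventually_cutoffDiff_eq {α : Type*} {l : Filter α} {f g : α → ℝ} {a b t : ℝ}
    (hf : Tendsto f l (𝓝 a)) (hg : Tendsto g l (𝓝 b)) (ha : a ≠ t) (hb : b ≠ t) :
    ∀ᶠ x in l, cutoffDiff (f x) (g x) t = cutoffDiff a b t := by
  have eventually_lt_iff : ∀ {f : α → ℝ} {a : ℝ}, Tendsto f l (𝓝 a) → a ≠ t →
      ∀ᶠ x in l, (f x < t ↔ a < t) := by
    intro f a hf ha
    rcases ha.lt_or_gt with h | h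
    · filter_upwards [hf.eventually (gt_mem_nhds h)] with x hx using iff_of_true hx h
    · filter_upwards [hf.eventually (lt_mem_nhds h)] with x hx using
        iff_of_false hx.not_gt h.not_gt
  filter_upwards [eventually_lt_iff hf ha, eventually_lt_iff hg hb] with x h₁ h₂
  simp only [cutoffDiff, h₁, h₂]

lemma cutoffDiff_div_of_le {a b : ℝ} (h : a ≤ b) (y : ℝ) :
    cutoffDiff a b y / y = (Ioc a b).indicator (·⁻¹) y := by
  rw [cutoffDiff_of_le h]
  by_cases hy : y ∈ Ioc a b <;> simp [hy]

lemma integrableOn_cutoffDiff_div_of_le {a b : ℝ} (ha : 0 < a) (h : a ≤ b) :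
    IntegrableOn (fun y => cutoffDiff a b y / y) (Ioi 0) := by
  simp_rw [cutoffDiff_div_of_le h]
  refine (IntegrableOn.integrable_indicator ?_ measurableSet_Ioc).integrableOn
  exact ((continuousOn_inv₀.mono fun y hy => (ha.trans_le hy.1).ne').integrableOn_Icc).mono_set
    Ioc_subset_Icc_self

lemma setIntegral_cutoffDiff_div_of_le {a b : ℝ} (ha : 0 < a) (h : a ≤ b) :
    ∫ y in Ioi 0, cutoffDiff a b y / y = log (b / a) := by
  simp_rw [cutoffDiff_div_of_le h]
  rw [setIntegral_indicator measurableSet_Ioc,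
    show Ioi 0 ∩ Ioc a b = Ioc a b from inter_eq_right.mpr fun y hy => ha.trans hy.1,
    ← intervalIntegral.integral_of_le h, integral_inv_of_pos ha (ha.trans_le h)]

lemma integrableOn_cutoffDiff_div {a b : ℝ} (ha : 0 < a) (hb : 0 < b) :
    IntegrableOn (fun y => cutoffDiff a b y / y) (Ioi 0) := by
  rcases le_total a b with h | h
  · exact integrableOn_cutoffDiff_div_of_le ha h
  · simpa [cutoffDiff_swap b a, neg_div] using (integrableOn_cutoffDiff_div_of_le hb h).neg

lemma setIntegral_cutoffDiff_div {a b : ℝ} (ha : 0 < a) (hb : 0 < b) :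
    ∫ y in Ioi 0, cutoffDiff a b y / y = log (b / a) := by
  rcases le_total a b with h | h
  · exact setIntegral_cutoffDiff_div_of_le ha h
  · simp_rw [cutoffDiff_swap b a, neg_div]
    rw [integral_neg, setIntegral_cutoffDiff_div_of_le hb h, ← log_inv, inv_div]

lemma pow_pred_mul_div_pow {K : Type*} [Field K] {n : ℕ} (hn : n ≠ 0) {y : K} (hy : y ≠ 0)
    (x : K) : y ^ (n - 1) * (x / y ^ n) = x / y := by
  obtain ⟨k, rfl⟩ := Nat.exists_eq_succ_of_ne_zero hn
  rw [Nat.succ_sub_one, pow_succ]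
  field_simp

section Kernel

variable {E F : Type*} [NormedAddCommGroup E] [NormedSpace ℝ E] [NormedAddCommGroup F]
  [NormedSpace ℝ F] {ρ₁ ρ₂ : E → ℝ} {ψ : E → F} {a b c C M : ℝ}

/-- The difference of the regularized propagators `Θ / ‖u‖ ^ d` with cutoff radii `ρ₁ u`, `ρ₂ u`
(`d = 2` on `ℂ`). -/
noncomputable def cutoffKernel (ρ₁ ρ₂ : E → ℝ) (u : E) : ℝ :=
  cutoffDiff (ρ₁ u) (ρ₂ u) ‖u‖ / ‖u‖ ^ finrank ℝ E

lemma abs_cutoffKernel_le (h₁ : ∀ u, ρ₁ u ∈ Icc c C) (h₂ : ∀ u, ρ₂ u ∈ Icc c C) (u : E) :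
    |cutoffKernel ρ₁ ρ₂ u| ≤ cutoffKernel (fun _ => c) (fun _ => C) u := by
  rw [cutoffKernel, cutoffKernel, abs_div, abs_of_nonneg (pow_nonneg (norm_nonneg u) _)]
  exact div_le_div_of_nonneg_right (abs_cutoffDiff_le (h₁ u) (h₂ u)) (pow_nonneg (norm_nonneg u) _)

lemma norm_cutoffKernel_smul_le (h₁ : ∀ u, ρ₁ u ∈ Icc c C) (h₂ : ∀ u, ρ₂ u ∈ Icc c C)
    (hψ : ∀ u, ‖ψ u‖ ≤ M) (u : E) :
    ‖cutoffKernel ρ₁ ρ₂ u • ψ u‖ ≤ M * cutoffKernel (fun _ => c) (fun _ => C) u := by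
  rw [norm_smul, Real.norm_eq_abs, mul_comm]
  exact mul_le_mul (hψ u) (abs_cutoffKernel_le h₁ h₂ u) (abs_nonneg _)
    ((norm_nonneg _).trans (hψ u))

variable [MeasurableSpace E] [BorelSpace E]

lemma Continuous.measurable_cutoffKernel_comp_smul (hρ₁ : Continuous ρ₁) (hρ₂ : Continuous ρ₂)
    (ε : ℝ) :
    Measurable (cutoffKernel (fun v => ρ₁ (ε • v)) (fun v => ρ₂ (ε • v))) :=
  ((hρ₁.comp (continuous_const_smul ε)).measurable.cutoffDiff
    (hρ₂.comp (continuous_const_smul ε)).measurable measurable_norm).div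
    (measurable_norm.pow_const _)

variable [FiniteDimensional ℝ E] (μ : Measure E) [μ.IsAddHaarMeasure]

lemma integral_cutoffKernel_mul_eq_integral_comp_smul {ε : ℝ} (hε : 0 < ε) (ρ₁ ρ₂ : E → ℝ)
    (ψ : E → F) :
    ∫ u, cutoffKernel (fun u => ε * ρ₁ u) (fun u => ε * ρ₂ u) u • ψ u ∂μ =
      ∫ v, cutoffKernel (fun v => ρ₁ (ε • v)) (fun v => ρ₂ (ε • v)) v • ψ (ε • v) ∂μ := by
  have hscale : ∀ v : E,
      cutoffKernel (fun v => ρ₁ (ε • v)) (fun v => ρ₂ (ε • v)) v • ψ (ε • v) =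
        ε ^ finrank ℝ E • (cutoffKernel (fun u => ε * ρ₁ u) (fun u => ε * ρ₂ u) (ε • v) •
          ψ (ε • v)) := by
    intro v
    rw [smul_smul, cutoffKernel, cutoffKernel, norm_smul, Real.norm_of_nonneg hε.le,
      cutoffDiff_mul_left hε, mul_pow, ← mul_div_assoc, mul_div_mul_left _ _ (pow_ne_zero _ hε.ne')]
  simp_rw [hscale]
  rw [integral_smul, Measure.integral_comp_smul μ
      (fun u => cutoffKernel (fun u => ε * ρ₁ u) (fun u => ε * ρ₂ u) u • ψ u) ε,
    smul_smul, abs_inv, abs_of_pos (by positivity), mul_inv_cancel₀ (by positivity), one_smul]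

variable [Nontrivial E]

lemma integrable_cutoffKernel_const (ha : 0 < a) (hb : 0 < b) :
    Integrable (cutoffKernel (fun _ : E => a) (fun _ => b)) μ := by
  refine (integrable_fun_norm_addHaar μ (f := fun y => cutoffDiff a b y / y ^ finrank ℝ E)).mpr ?_
  exact (integrableOn_cutoffDiff_div ha hb).congr_fun
    (fun y (hy : 0 < y) => (pow_pred_mul_div_pow finrank_pos.ne' hy.ne' _).symm) measurableSet_Ioi

lemma integral_cutoffKernel_const (ha : 0 < a) (hb : 0 < b) :
    ∫ u, cutoffKernel (fun _ : E => a) (fun _ => b) u ∂μ =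
      finrank ℝ E * μ.real (ball 0 1) * log (b / a) := by
  simp only [cutoffKernel]
  rw [integral_fun_norm_addHaar μ (fun y => cutoffDiff a b y / y ^ finrank ℝ E), nsmul_eq_mul]
  simp only [smul_eq_mul]
  rw [setIntegral_congr_fun measurableSet_Ioi fun y (hy : 0 < y) =>
      pow_pred_mul_div_pow finrank_pos.ne' hy.ne' (cutoffDiff a b y),
    setIntegral_cutoffDiff_div ha hb, mul_assoc]

lemma norm_integral_cutoffKernel_smul_le (hc : 0 < c) (h₁ : ∀ u, ρ₁ u ∈ Icc c C)
    (h₂ : ∀ u, ρ₂ u ∈ Icc c C) (hψ : ∀ u, ‖ψ u‖ ≤ M) :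
    ‖∫ u, cutoffKernel ρ₁ ρ₂ u • ψ u ∂μ‖ ≤ M * (finrank ℝ E * μ.real (ball 0 1) * log (C / c)) := by
  have hC : 0 < C := hc.trans_le ((h₁ 0).1.trans (h₁ 0).2)
  calc ‖∫ u, cutoffKernel ρ₁ ρ₂ u • ψ u ∂μ‖
      ≤ ∫ u, M * cutoffKernel (fun _ => c) (fun _ => C) u ∂μ :=
        norm_integral_le_of_norm_le ((integrable_cutoffKernel_const μ hc hC).const_mul M)
          (ae_of_all _ (norm_cutoffKernel_smul_le h₁ h₂ hψ))
    _ = _ := by rw [integral_const_mul, integral_cutoffKernel_const μ hc hC]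

theorem tendsto_integral_cutoffKernel_smul [CompleteSpace F] (hρ₁ : Continuous ρ₁)
    (hρ₂ : Continuous ρ₂) (hc : 0 < c) (h₁ : ∀ u, ρ₁ u ∈ Icc c C) (h₂ : ∀ u, ρ₂ u ∈ Icc c C)
    (hψ : Continuous ψ) (hM : ∀ u, ‖ψ u‖ ≤ M) :
    Tendsto (fun ε => ∫ u, cutoffKernel (fun u => ε * ρ₁ u) (fun u => ε * ρ₂ u) u • ψ u ∂μ)
      (𝓝[>] 0) (𝓝 ((finrank ℝ E * μ.real (ball 0 1) * log (ρ₂ 0 / ρ₁ 0)) • ψ 0)) := by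
  have hC : 0 < C := hc.trans_le ((h₁ 0).1.trans (h₁ 0).2)
  have hsmul : ∀ v : E, Tendsto (fun ε : ℝ => ε • v) (𝓝[>] 0) (𝓝 0) := fun v =>
    tendsto_nhdsWithin_of_tendsto_nhds (by simpa using (tendsto_id (x := 𝓝 (0 : ℝ))).smul_const v)
  have hsphere : ∀ r : ℝ, ∀ᵐ v ∂μ, ‖v‖ ≠ r := fun r => ae_iff.mpr <|
    measure_mono_null (fun v hv => mem_sphere_zero_iff_norm.mpr (not_not.mp hv))
      (Measure.addHaar_sphere μ 0 r)
  refine Tendsto.congr' (eventually_mem_nhdsWithin.mono fun ε hε =>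
    (integral_cutoffKernel_mul_eq_integral_comp_smul μ hε ρ₁ ρ₂ ψ).symm) ?_
  rw [← integral_cutoffKernel_const μ ((h₁ 0).1.trans_lt' hc) ((h₂ 0).1.trans_lt' hc),
    ← integral_smul_const]
  refine tendsto_integral_filter_of_dominated_convergence
    (fun v => M * cutoffKernel (fun _ => c) (fun _ => C) v)
    (.of_forall fun ε => ((hρ₁.measurable_cutoffKernel_comp_smul hρ₂ ε).aestronglyMeasurable.smul
      (hψ.comp (continuous_const_smul ε)).aestronglyMeasurable))
    (.of_forall fun ε => ae_of_all _ (norm_cutoffKernel_smul_le (fun v => h₁ (ε • v))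
      (fun v => h₂ (ε • v)) (fun v => hM (ε • v))))
    ((integrable_cutoffKernel_const μ hc hC).const_mul M) ?_
  filter_upwards [hsphere (ρ₁ 0), hsphere (ρ₂ 0)] with v hv₁ hv₂
  have hkernel := eventually_cutoffDiff_eq ((hρ₁.tendsto 0).comp (hsmul v))
    ((hρ₂.tendsto 0).comp (hsmul v)) hv₁.symm hv₂.symm
  refine Tendsto.smul (tendsto_const_nhds.congr' (hkernel.mono fun ε hε => ?_))
    ((hψ.tendsto 0).comp (hsmul v))
  simp only [cutoffKernel, Function.comp_apply] at hε ⊢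
  rw [hε]

end Kernel

noncomputable def midRadius {α : Type*} [Add α] (ℓ : α → ℝ) (z u : α) : ℝ :=
  (ℓ z + ℓ (z + u)) / 2

lemma midRadius_mem_Icc {α : Type*} [Add α] {ℓ : α → ℝ} {c C : ℝ} (hpos : ∀ w, 0 < ℓ w)
    (hC : ∀ w, ℓ w ≤ C) {z : α} (hc : c ≤ ℓ z / 2) (u : α) : midRadius ℓ z u ∈ Icc c C := by
  have := hpos (z + u)
  have := hC z
  have := hC (z + u)
  constructor <;> unfold midRadius <;> linarith

lemma Continuous.midRadius {α X : Type*} [TopologicalSpace α] [Add α] [ContinuousAdd α]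
    [TopologicalSpace X] {ℓ : α → ℝ} (hℓ : Continuous ℓ) {f g : X → α} (hf : Continuous f)
    (hg : Continuous g) : Continuous fun x => midRadius ℓ (f x) (g x) :=
  ((hℓ.comp hf).add (hℓ.comp (hf.add hg))).div_const 2

section Outer

variable {E F : Type*} [NormedAddCommGroup E] [NormedSpace ℝ E] [FiniteDimensional ℝ E]
  [Nontrivial E] [MeasurableSpace E] [BorelSpace E] (μ ν : Measure E) [μ.IsAddHaarMeasure]
  [IsFiniteMeasureOnCompacts ν] [NormedAddCommGroup F] [NormedSpace ℝ F] [CompleteSpace F]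

theorem tendsto_integral_integral_cutoffKernel_smul {ℓ₁ ℓ₂ : E → ℝ} {C : ℝ}
    (h₁c : Continuous ℓ₁) (h₂c : Continuous ℓ₂) (h₁C : ∀ w, ℓ₁ w ≤ C) (h₂C : ∀ w, ℓ₂ w ≤ C)
    (h₁p : ∀ w, 0 < ℓ₁ w) (h₂p : ∀ w, 0 < ℓ₂ w) {φ : E × E → F} (hφc : Continuous φ)
    (hφs : HasCompactSupport φ) :
    Tendsto (fun ε => ∫ z, ∫ u, cutoffKernel (fun u => ε * midRadius ℓ₁ z u)
        (fun u => ε * midRadius ℓ₂ z u) u • φ (z, u) ∂μ ∂ν) (𝓝[>] 0)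
      (𝓝 (∫ z, (finrank ℝ E * μ.real (ball 0 1) * log (ℓ₂ z / ℓ₁ z)) • φ (z, 0) ∂ν)) := by
  obtain ⟨M, hM⟩ := hφc.bounded_above_of_compact_support hφs
  set K := Prod.fst '' tsupport φ
  have hK : IsCompact K := hφs.image continuous_fst
  obtain ⟨c, hc, hcK⟩ := hK.exists_forall_le' ((h₁c.min h₂c).div_const 2).continuousOn
    fun z _ => half_pos (lt_min (h₁p z) (h₂p z))
  have hφK : ∀ z ∉ K, ∀ u, φ (z, u) = 0 := fun z hz u =>
    image_eq_zero_of_notMem_tsupport fun h => hz ⟨_, h, rfl⟩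
  refine tendsto_integral_filter_of_dominated_convergence
    (K.indicator fun _ => M * (finrank ℝ E * μ.real (ball 0 1) * log (C / c))) ?_ ?_
    ((integrable_indicator_iff hK.measurableSet).mpr (integrableOn_const hK.measure_lt_top.ne)) ?_
  · refine .of_forall fun ε => StronglyMeasurable.aestronglyMeasurable ?_
    refine StronglyMeasurable.integral_prod_right' (f := fun p : E × E => cutoffKernel
      (fun u => ε * midRadius ℓ₁ p.1 u) (fun u => ε * midRadius ℓ₂ p.1 u) p.2 • φ p) ?_
    have hradius : ∀ {ℓ : E → ℝ}, Continuous ℓ →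
        Measurable fun p : E × E => ε * midRadius ℓ p.1 p.2 := fun hℓ =>
      (continuous_const.mul (hℓ.midRadius continuous_fst continuous_snd)).measurable
    exact (((hradius h₁c).cutoffDiff (hradius h₂c) measurable_snd.norm).div
      (measurable_snd.norm.pow_const _)).stronglyMeasurable.smul hφc.stronglyMeasurable
  · refine eventually_mem_nhdsWithin.mono fun ε (hε : 0 < ε) => ae_of_all _ fun z => ?_
    by_cases hz : z ∈ K
    · have hradius : ∀ {ℓ : E → ℝ}, (∀ w, 0 < ℓ w) → (∀ w, ℓ w ≤ C) → c ≤ ℓ z / 2 →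
          ∀ u, ε * midRadius ℓ z u ∈ Icc (ε * c) (ε * C) := fun hpos hC hcz u =>
        let h := midRadius_mem_Icc hpos hC hcz u
        ⟨mul_le_mul_of_nonneg_left h.1 hε.le, mul_le_mul_of_nonneg_left h.2 hε.le⟩
      have hbound := norm_integral_cutoffKernel_smul_le μ (mul_pos hε hc)
        (hradius h₁p h₁C ((hcK z hz).trans (by gcongr; exact min_le_left _ _)))
        (hradius h₂p h₂C ((hcK z hz).trans (by gcongr; exact min_le_right _ _)))
        fun u => hM (z, u)
      rwa [mul_div_mul_left _ _ hε.ne', ← indicator_of_mem hz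
        (fun _ => M * (finrank ℝ E * μ.real (ball 0 1) * log (C / c)))] at hbound
    · simp [indicator_of_notMem hz, hφK z hz]
  · refine ae_of_all _ fun z => ?_
    have hcz : 0 < min (ℓ₁ z) (ℓ₂ z) / 2 := half_pos (lt_min (h₁p z) (h₂p z))
    simpa [midRadius] using tendsto_integral_cutoffKernel_smul μ
      (h₁c.midRadius continuous_const continuous_id) (h₂c.midRadius continuous_const continuous_id)
      hcz (midRadius_mem_Icc h₁p h₁C (by gcongr; exact min_le_left _ _))
      (midRadius_mem_Icc h₂p h₂C (by gcongr; exact min_le_right _ _))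
      (hφc.comp (Continuous.prodMk_right z)) fun u => hM (z, u)

end Outer

lemma indicator_sub_indicator_eq_cutoffDiff {α : Type*} [Add α] [Norm α] (ℓ₁ ℓ₂ : α → ℝ)
    (ε : ℝ) (z u : α) :
    {p : α × α | ‖p.2‖ > ε * (ℓ₁ p.1 + ℓ₁ (p.1 + p.2)) / 2}.indicator (fun _ => (1 : ℝ)) (z, u) -
        {p : α × α | ‖p.2‖ > ε * (ℓ₂ p.1 + ℓ₂ (p.1 + p.2)) / 2}.indicator (fun _ => 1) (z, u) =
      cutoffDiff (ε * midRadius ℓ₁ z u) (ε * midRadius ℓ₂ z u) ‖u‖ := by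
  unfold cutoffDiff midRadius
  simp [indicator, mul_div_assoc]

/-- Coordinate form of the one-loop cutoff-dependence Lemma: the difference of the
regularized double integrals against a compactly supported test density `φ`
converges, as `ε → 0⁺`, to the boundary integral `-2π ∫ log(ℓ₁/ℓ₂) φ(·,0)`. -/
theorem cutoff_difference_limit_with_density (ℓ₁ ℓ₂ : ℂ → ℝ)
    (h₁c : Continuous ℓ₁) (h₂c : Continuous ℓ₂)
    (h₁b : ∃ C, ∀ w, ℓ₁ w ≤ C) (h₂b : ∃ C, ∀ w, ℓ₂ w ≤ C)
    (h₁p : ∀ w, 0 < ℓ₁ w) (h₂p : ∀ w, 0 < ℓ₂ w)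
    (φ : ℂ × ℂ → ℂ) (hφc : Continuous φ) (hφs : HasCompactSupport φ) :
    Tendsto
      (fun ε : ℝ =>
        ∫ z : ℂ, (∫ u : ℂ,
          Complex.ofReal
              ((Set.indicator {p : ℂ × ℂ | ‖p.2‖ > ε * (ℓ₁ p.1 + ℓ₁ (p.1 + p.2)) / 2}
                (fun _ => (1 : ℝ)) (z, u))
              - (Set.indicator {p : ℂ × ℂ | ‖p.2‖ > ε * (ℓ₂ p.1 + ℓ₂ (p.1 + p.2)) / 2}
                (fun _ => (1 : ℝ)) (z, u)))
            * φ (z, u) * Complex.ofReal ((‖u‖ ^ 2)⁻¹) ∂volume) ∂volume)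
      (nhdsWithin 0 (Set.Ioi 0))
      (nhds ((-(2 * π) : ℂ)
        * ∫ z : ℂ, Complex.ofReal (Real.log (ℓ₁ z / ℓ₂ z)) * φ (z, 0) ∂volume)) := by
  obtain ⟨C₁, hC₁⟩ := h₁b
  obtain ⟨C₂, hC₂⟩ := h₂b
  have hlim := tendsto_integral_integral_cutoffKernel_smul volume volume h₁c h₂c
    (fun w => (hC₁ w).trans (le_max_left C₁ C₂)) (fun w => (hC₂ w).trans (le_max_right C₁ C₂))
    h₁p h₂p hφc hφs
  convert hlim using 4 with ε z
  · congr 1 with u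
    rw [indicator_sub_indicator_eq_cutoffDiff]
    simp only [cutoffKernel, Complex.finrank_real_complex, Complex.real_smul, div_eq_mul_inv,
      Complex.ofReal_mul]
    ring
  · have hball : volume.real (ball (0 : ℂ) 1) = π := by simp [Measure.real, Complex.volume_ball]
    rw [← integral_const_mul]
    congr 1 with z
    rw [Complex.finrank_real_complex, hball, log_div (h₁p z).ne' (h₂p z).ne',
      log_div (h₂p z).ne' (h₁p z).ne', Complex.real_smul]
    push_cast
    ring
end

section
/- Let ℓ₁, ℓ₂ : ℂ → ℝ be continuous, bounded functions with ℓᵢ(w) > 0 for all w, and let φ : ℂ × ℂ → ℂ be continuous with compact support such that φ(z, 0) = 0 for every z ∈ ℂ. With χᵢ,ε the indicator of {(z,u) : ‖u‖ > ε·(ℓᵢ(z) + ℓᵢ(z + u))/2}, the double Lebesgue integral ∫_ℂ ∫_ℂ (χ₁,ε(z,u) − χ₂,ε(z,u)) · φ(z,u) · ‖u‖⁻² du dz tends to 0 as ε → 0⁺. -/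
/-!
Where the two cutoff indicators differ, `‖u‖` lies between the thresholds
`ε (ℓᵢ z + ℓᵢ (z + u)) / 2`. On the support of `φ` both `z` and `z + u` stay in a fixed compact
ball, where the `ℓᵢ` are bounded below by some `m > 0`; they are bounded above by `M` everywhere.
So the integrand lives on `{‖z‖ ≤ R, ε m < ‖u‖ ≤ ε M}`, whose `u`-slices have area `π (ε M)²`,
while `‖u‖⁻² < (ε m)⁻²` there. Since `φ (z, 0) = 0` and `φ` is uniformly continuous, `‖φ‖ ≤ δ`
on that region once `ε` is small, and the integral is at most `δ (π M R / m)²`.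
-/

open MeasureTheory Real Filter Set Metric

lemma norm_integral_le_mul_measureReal_of_ne_zero {α E : Type*} [MeasurableSpace α]
    [NormedAddCommGroup E] [NormedSpace ℝ E] {μ : Measure α} {f : α → E} {s : Set α} {a : ℝ}
    (hs : μ s < ⊤) (ha : 0 ≤ a) (hf : ∀ x, f x ≠ 0 → x ∈ s ∧ ‖f x‖ ≤ a) :
    ‖∫ x, f x ∂μ‖ ≤ a * μ.real s := by
  rw [← setIntegral_eq_integral_of_forall_compl_eq_zero fun x hx =>
    by_contra fun h => hx (hf x h).1]
  refine norm_setIntegral_le_of_norm_le_const hs fun x _ => ?_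
  by_cases hx : f x = 0
  · simpa [hx] using ha
  · exact (hf x hx).2

lemma Complex.volume_real_closedBall (a : ℂ) {r : ℝ} (hr : 0 ≤ r) :
    volume.real (closedBall a r) = π * r ^ 2 := by
  simp [measureReal_def, ENNReal.toReal_ofReal hr, mul_comm]

lemma UniformContinuous.exists_pos_forall_norm_lt_of_apply_zero {X F G : Type*}
    [PseudoMetricSpace X] [SeminormedAddCommGroup F] [SeminormedAddCommGroup G]
    {φ : X × F → G} (hφ : UniformContinuous φ) (h0 : ∀ z, φ (z, 0) = 0) {δ : ℝ} (hδ : 0 < δ) :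
    ∃ η > 0, ∀ z u, ‖u‖ < η → ‖φ (z, u)‖ < δ := by
  obtain ⟨η, hη, hφη⟩ := Metric.uniformContinuous_iff.1 hφ δ hδ
  refine ⟨η, hη, fun z u hu => ?_⟩
  have hdist : dist (z, u) (z, (0 : F)) < η := by simpa [Prod.dist_eq] using hu
  simpa [h0 z] using hφη hdist

section Cutoff

variable {E : Type*} [SeminormedAddCommGroup E] {ε m M : ℝ} {ℓ ℓ₁ ℓ₂ : E → ℝ} {p : E × E}

noncomputable def cutoffThreshold (ε : ℝ) (ℓ : E → ℝ) (p : E × E) : ℝ :=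
  ε * (ℓ p.1 + ℓ (p.1 + p.2)) / 2

/-- The paper's `Θ_{εℓ}(z₁, z₂) = 1` exactly on `cutoffSet ε ℓ`, in the coordinates
`p = (z₁, z₂ - z₁)`. -/
def cutoffSet (ε : ℝ) (ℓ : E → ℝ) : Set (E × E) :=
  {p | ‖p.2‖ > cutoffThreshold ε ℓ p}

lemma norm_snd_mem_Ioc_of_indicator_cutoffSet_ne
    (h : (cutoffSet ε ℓ₁).indicator (fun _ => (1 : ℝ)) p ≠
      (cutoffSet ε ℓ₂).indicator (fun _ => 1) p) :
    ‖p.2‖ ∈ Ioc (min (cutoffThreshold ε ℓ₁ p) (cutoffThreshold ε ℓ₂ p))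
      (max (cutoffThreshold ε ℓ₁ p) (cutoffThreshold ε ℓ₂ p)) := by
  by_cases h₁ : p ∈ cutoffSet ε ℓ₁ <;> by_cases h₂ : p ∈ cutoffSet ε ℓ₂ <;>
    simp_all [cutoffSet]

lemma mul_le_cutoffThreshold (hε : 0 ≤ ε) (h₁ : m ≤ ℓ p.1) (h₂ : m ≤ ℓ (p.1 + p.2)) :
    ε * m ≤ cutoffThreshold ε ℓ p := by
  unfold cutoffThreshold
  nlinarith

lemma cutoffThreshold_le_mul (hε : 0 ≤ ε) (hM : ∀ w, ℓ w ≤ M) :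
    cutoffThreshold ε ℓ p ≤ ε * M := by
  unfold cutoffThreshold
  nlinarith [hM p.1, hM (p.1 + p.2)]

end Cutoff

noncomputable def cutoffDifferenceIntegrand (ε : ℝ) (ℓ₁ ℓ₂ : ℂ → ℝ) (φ : ℂ × ℂ → ℂ)
    (z u : ℂ) : ℂ :=
  (((cutoffSet ε ℓ₁).indicator (fun _ => 1) (z, u) -
      (cutoffSet ε ℓ₂).indicator (fun _ => 1) (z, u) : ℝ) : ℂ) *
    φ (z, u) * ((‖u‖ ^ 2)⁻¹ : ℝ)

section Estimate

variable {ε m M R δ : ℝ} {ℓ₁ ℓ₂ : ℂ → ℝ} {φ : ℂ × ℂ → ℂ}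

lemma bounds_of_cutoffDifferenceIntegrand_ne_zero (hε : 0 < ε) (hm : 0 < m)
    (hℓm : ∀ w ∈ closedBall (0 : ℂ) (2 * R), m ≤ ℓ₁ w ∧ m ≤ ℓ₂ w)
    (hℓM : ∀ w, ℓ₁ w ≤ M ∧ ℓ₂ w ≤ M) (hφR : tsupport φ ⊆ closedBall 0 R)
    (hφδ : ∀ z u, ‖u‖ ≤ ε * M → ‖φ (z, u)‖ ≤ δ) {z u : ℂ}
    (h : cutoffDifferenceIntegrand ε ℓ₁ ℓ₂ φ z u ≠ 0) :
    ‖z‖ ≤ R ∧ ‖u‖ ≤ ε * M ∧ ‖cutoffDifferenceIntegrand ε ℓ₁ ℓ₂ φ z u‖ ≤ δ / (ε * m) ^ 2 := by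
  have hφ : φ (z, u) ≠ 0 := fun h0 => h (by simp [cutoffDifferenceIntegrand, h0])
  have hind : (cutoffSet ε ℓ₁).indicator (fun _ => (1 : ℝ)) (z, u) ≠
      (cutoffSet ε ℓ₂).indicator (fun _ => 1) (z, u) :=
    fun h0 => h (by simp [cutoffDifferenceIntegrand, h0])
  have hzuR : ‖z‖ ≤ R ∧ ‖u‖ ≤ R := by
    simpa [Prod.norm_def] using hφR (subset_tsupport φ hφ)
  have hz : z ∈ closedBall 0 (2 * R) := by
    rw [mem_closedBall_zero_iff]; linarith [norm_nonneg u]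
  have hzu : z + u ∈ closedBall 0 (2 * R) := by
    rw [mem_closedBall_zero_iff]; linarith [norm_add_le z u]
  obtain ⟨hlo, hhi⟩ := norm_snd_mem_Ioc_of_indicator_cutoffSet_ne hind
  have hu_gt : ε * m < ‖u‖ := lt_of_le_of_lt
    (le_min (mul_le_cutoffThreshold hε.le (hℓm z hz).1 (hℓm _ hzu).1)
      (mul_le_cutoffThreshold hε.le (hℓm z hz).2 (hℓm _ hzu).2)) hlo
  have hu_le : ‖u‖ ≤ ε * M := hhi.trans
    (max_le (cutoffThreshold_le_mul hε.le fun w => (hℓM w).1)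
      (cutoffThreshold_le_mul hε.le fun w => (hℓM w).2))
  have hdiff : ‖(((cutoffSet ε ℓ₁).indicator (fun _ => 1) (z, u) -
      (cutoffSet ε ℓ₂).indicator (fun _ => 1) (z, u) : ℝ) : ℂ)‖ ≤ 1 := by
    rw [Complex.norm_real]
    by_cases h₁ : (z, u) ∈ cutoffSet ε ℓ₁ <;> by_cases h₂ : (z, u) ∈ cutoffSet ε ℓ₂ <;>
      simp [h₁, h₂]
  refine ⟨hzuR.1, hu_le, ?_⟩
  calc ‖cutoffDifferenceIntegrand ε ℓ₁ ℓ₂ φ z u‖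
      = ‖(((cutoffSet ε ℓ₁).indicator (fun _ => 1) (z, u) -
          (cutoffSet ε ℓ₂).indicator (fun _ => 1) (z, u) : ℝ) : ℂ)‖ *
        ‖φ (z, u)‖ * (‖u‖ ^ 2)⁻¹ := by
        simp only [cutoffDifferenceIntegrand, norm_mul, Complex.norm_real, norm_inv, norm_pow,
          norm_norm]
    _ ≤ 1 * δ * ((ε * m) ^ 2)⁻¹ := by
        have hδ : ‖φ (z, u)‖ ≤ δ := hφδ z u hu_le
        gcongr
        linarith [norm_nonneg (φ (z, u))]
    _ = δ / (ε * m) ^ 2 := by ring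

lemma norm_integral_cutoffDifferenceIntegrand_le (hε : 0 < ε) (hm : 0 < m)
    (hℓm : ∀ w ∈ closedBall (0 : ℂ) (2 * R), m ≤ ℓ₁ w ∧ m ≤ ℓ₂ w)
    (hℓM : ∀ w, ℓ₁ w ≤ M ∧ ℓ₂ w ≤ M) (hφR : tsupport φ ⊆ closedBall 0 R)
    (hφδ : ∀ z u, ‖u‖ ≤ ε * M → ‖φ (z, u)‖ ≤ δ) (hM : 0 ≤ M) (hR : 0 ≤ R) :
    ‖∫ z, ∫ u, cutoffDifferenceIntegrand ε ℓ₁ ℓ₂ φ z u‖ ≤ δ * (π * M * R / m) ^ 2 := by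
  have hδ : 0 ≤ δ := (norm_nonneg _).trans (hφδ 0 0 (by simpa using mul_nonneg hε.le hM))
  have hsupp {z u : ℂ} := bounds_of_cutoffDifferenceIntegrand_ne_zero (z := z) (u := u)
    hε hm hℓm hℓM hφR hφδ
  have hinner : ∀ z, ‖∫ u, cutoffDifferenceIntegrand ε ℓ₁ ℓ₂ φ z u‖ ≤
      δ / (ε * m) ^ 2 * volume.real (closedBall (0 : ℂ) (ε * M)) := fun z =>
    norm_integral_le_mul_measureReal_of_ne_zero measure_closedBall_lt_top (by positivity)
      fun u hu => ⟨mem_closedBall_zero_iff.2 (hsupp hu).2.1, (hsupp hu).2.2⟩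
  calc ‖∫ z, ∫ u, cutoffDifferenceIntegrand ε ℓ₁ ℓ₂ φ z u‖
      ≤ δ / (ε * m) ^ 2 * volume.real (closedBall (0 : ℂ) (ε * M)) *
          volume.real (closedBall (0 : ℂ) R) := by
        refine norm_integral_le_mul_measureReal_of_ne_zero measure_closedBall_lt_top
          (by positivity) fun z hz => ⟨?_, hinner z⟩
        obtain ⟨u, hu⟩ := exists_ne_zero_of_integral_ne_zero hz
        exact mem_closedBall_zero_iff.2 (hsupp hu).1
    _ = δ * (π * M * R / m) ^ 2 := by
        rw [Complex.volume_real_closedBall _ (by positivity), Complex.volume_real_closedBall _ hR]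
        field_simp

end Estimate

/-- Densities vanishing on the diagonal do not contribute to the `ε → 0⁺` limit of the
cutoff-dependence of the regularized one-loop integrals. -/
theorem cutoff_difference_limit_vanishing_density (ℓ₁ ℓ₂ : ℂ → ℝ)
    (h₁c : Continuous ℓ₁) (h₂c : Continuous ℓ₂)
    (h₁b : ∃ C, ∀ w, ℓ₁ w ≤ C) (h₂b : ∃ C, ∀ w, ℓ₂ w ≤ C)
    (h₁p : ∀ w, 0 < ℓ₁ w) (h₂p : ∀ w, 0 < ℓ₂ w)
    (φ : ℂ × ℂ → ℂ) (hφc : Continuous φ) (hφs : HasCompactSupport φ)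
    (hφ0 : ∀ z : ℂ, φ (z, 0) = 0) :
    Tendsto
      (fun ε : ℝ =>
        ∫ z : ℂ, (∫ u : ℂ,
          Complex.ofReal
              ((Set.indicator {p : ℂ × ℂ | ‖p.2‖ > ε * (ℓ₁ p.1 + ℓ₁ (p.1 + p.2)) / 2}
                (fun _ => (1 : ℝ)) (z, u))
              - (Set.indicator {p : ℂ × ℂ | ‖p.2‖ > ε * (ℓ₂ p.1 + ℓ₂ (p.1 + p.2)) / 2}
                (fun _ => (1 : ℝ)) (z, u)))
            * φ (z, u) * Complex.ofReal ((‖u‖ ^ 2)⁻¹) ∂volume) ∂volume)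
      (nhdsWithin 0 (Set.Ioi 0))
      (nhds 0) := by
  obtain ⟨M, hM, hℓM⟩ : ∃ M, 0 < M ∧ ∀ w, ℓ₁ w ≤ M ∧ ℓ₂ w ≤ M := by
    obtain ⟨C₁, hC₁⟩ := h₁b
    obtain ⟨C₂, hC₂⟩ := h₂b
    exact ⟨max 1 (max C₁ C₂), by positivity, fun w =>
      ⟨(hC₁ w).trans (by simp), (hC₂ w).trans (by simp)⟩⟩
  obtain ⟨R, hR, hφR⟩ := hφs.isBounded.subset_closedBall_lt 0 0
  obtain ⟨m, hm, hℓm⟩ := (isCompact_closedBall (0 : ℂ) (2 * R)).exists_forall_le'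
    (h₁c.min h₂c).continuousOn fun w _ => lt_min (h₁p w) (h₂p w)
  change Tendsto (fun ε => ∫ z, ∫ u, cutoffDifferenceIntegrand ε ℓ₁ ℓ₂ φ z u) _ _
  rw [NormedAddGroup.tendsto_nhds_zero]
  intro r hr
  set K := (π * M * R / m) ^ 2
  obtain ⟨η, hη, hφη⟩ := (hφs.uniformContinuous_of_continuous hφc
    ).exists_pos_forall_norm_lt_of_apply_zero hφ0 (div_pos hr (by positivity : 0 < K + 1))
  filter_upwards [Ioo_mem_nhdsGT (div_pos hη hM)] with ε ⟨hε, hεη⟩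
  calc ‖∫ z, ∫ u, cutoffDifferenceIntegrand ε ℓ₁ ℓ₂ φ z u‖ ≤ r / (K + 1) * K :=
        norm_integral_cutoffDifferenceIntegrand_le hε hm (fun w hw => le_min_iff.1 (hℓm w hw))
          hℓM hφR (fun z u hu => (hφη z u (hu.trans_lt ((lt_div_iff₀ hM).1 hεη))).le) hM.le hR.le
    _ < r := by
        rw [div_mul_eq_mul_div, div_lt_iff₀ (by positivity)]
        nlinarith
end
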